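/- Assumptions and notation as in the Section 3 construction: (W,S) is an irreducible Coxeter system of finite rank with m_{st} < ∞ for all s,t ∈ S, whose Coxeter graph G = (S,E) contains at least two circuits; T = (S,E_0) is a spanning tree of G and {s_1,t_1}, {s_2,t_2} ∈ E ∖ E_0 are two distinct edges; V is the resulting representation of W. For s ∈ S let V_-^s := {v ∈ V : s·v = −v}; then V_-^s = ⊕_{n∈ℤ} ℂ α_{s,n}. For every edge {s,t} ∈ E, the map f_{st} : V_-^s → V_-^t defined by f_{st}(v) := (t·v − v)/(2cos(π/m_{st})) is a well-defined linear isomorphism of vector spaces, and for every v ∈ V_-^s the vector f_{st}(v) lies in the W-subrepresentation of V generated by v. -/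

import Mathlib

/-!
Each generator `s` acts as `-1` on the row `⊕ₙ ℂ α_{s,n}` and moves every other vector only by
an element of that row, so its `(-1)`-eigenspace is exactly the row. For an edge `{s,t}` the
vector `t·α_{s,n} - α_{s,n}` is `2cos(π/m_{st})` times a nonzero multiple of `α_{t,φ(n)}` for a
bijection `φ` of `ℤ`; hence `f_{st}` maps the basis of one row to nonzero multiples of the basis
of the other and is bijective. Finally `f_{st}(v)` is a linear combination of `t·v` and `v`.
-/

open Finsupp in
/-- The Section 3 operators: for each `s ∈ S`, a linear operator on
`V = ⊕_{n ∈ ℤ, t ∈ S} ℂ α_{t,n}`, where `α_{t,n}` is the standard basis vector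
`Finsupp.single (t, n) 1`.  Here `M` is the Coxeter matrix (all of whose entries are assumed
finite), and `{s₁,t₁}`, `{s₂,t₂}` are the two chosen edges of the Coxeter graph outside of the
spanning tree.  The defining formulas are:
(i) `s·α_{s,n} = −α_{s,n}`;
(ii) `s₁·α_{t₁,n} = α_{t₁,n} + 2cos(π/m_{s₁t₁}) α_{s₁,n+1}`,
     `t₁·α_{s₁,n+1} = α_{s₁,n+1} + 2cos(π/m_{s₁t₁}) α_{t₁,n}`,
     `s₂·α_{t₂,n} = α_{t₂,n} + 2^{n+1}cos(π/m_{s₂t₂}) α_{s₂,n+1}`,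
     `t₂·α_{s₂,n+1} = α_{s₂,n+1} + 2^{−n+1}cos(π/m_{s₂t₂}) α_{t₂,n}`;
(iii) otherwise, for `s ≠ t`, `s·α_{t,n} = α_{t,n} + 2cos(π/m_{st}) α_{s,n}`
      (which is `α_{t,n}` when `m_{st} = 2` since `cos(π/2) = 0`). -/
noncomputable def sec3Act {B : Type*} [DecidableEq B] (M : CoxeterMatrix B)
    (s₁ t₁ s₂ t₂ : B) (s : B) : ((B × ℤ) →₀ ℂ) →ₗ[ℂ] ((B × ℤ) →₀ ℂ) :=
  Finsupp.lift _ ℂ _ fun p =>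
    if s = p.1 then -single p 1
    else if s = s₁ ∧ p.1 = t₁ then
      single p 1 + (2 * Real.cos (Real.pi / (M s₁ t₁ : ℝ)) : ℂ) • single (s₁, p.2 + 1) 1
    else if s = t₁ ∧ p.1 = s₁ then
      single p 1 + (2 * Real.cos (Real.pi / (M s₁ t₁ : ℝ)) : ℂ) • single (t₁, p.2 - 1) 1
    else if s = s₂ ∧ p.1 = t₂ then
      single p 1 + ((2 : ℂ) ^ (p.2 + 1) * (Real.cos (Real.pi / (M s₂ t₂ : ℝ)) : ℂ)) •
        single (s₂, p.2 + 1) 1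
    else if s = t₂ ∧ p.1 = s₂ then
      single p 1 + ((2 : ℂ) ^ (2 - p.2) * (Real.cos (Real.pi / (M s₂ t₂ : ℝ)) : ℂ)) •
        single (t₂, p.2 - 1) 1
    else
      single p 1 + (2 * Real.cos (Real.pi / (M s p.1 : ℝ)) : ℂ) • single (s, p.2) 1

/-- The Coxeter graph of a Coxeter matrix `M`. -/
def coxeterGraph {B : Type*} (M : CoxeterMatrix B) : SimpleGraph B where
  Adj s t := s ≠ t ∧ M s t ≠ 2
  symm := by
    constructor
    intro s t h
    exact ⟨h.1.symm, by rw [M.symmetric]; exact h.2⟩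
  loopless := by constructor; intro s h; exact h.1 rfl

/-- The subspace of vectors fixed by all the operators `σ s`. -/
def fixedSubmodule {B V : Type*} [AddCommGroup V] [Module ℂ V]
    (σ : B → V →ₗ[ℂ] V) : Submodule ℂ V where
  carrier := {v | ∀ s, σ s v = v}
  add_mem' := by
    intro a b ha hb s
    simp [map_add, ha s, hb s]
  zero_mem' := by intro s; simp
  smul_mem' := by
    intro c a ha s
    simp [map_smul, ha s]

open Finsupp

/- `m = 0` encodes `m = ∞`: then `π / 0 = 0` and `2 cos 0 = 2`, the usual value of
`2 cos (π / ∞)`. -/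
theorem two_mul_cos_pi_div_ne_zero {m : ℕ} (hm : m ≠ 2) :
    2 * Real.cos (Real.pi / m) ≠ 0 := by
  refine mul_ne_zero two_ne_zero ?_
  match m, hm with
  | 0, _ => simp
  | 1, _ => simp
  | m + 3, _ =>
    have hpos : 0 < Real.pi / (m + 3 : ℕ) := by positivity
    refine (Real.cos_pos_of_mem_Ioo ⟨by linarith [Real.pi_pos], ?_⟩).ne'
    rw [div_lt_div_iff₀ (by positivity) two_pos]
    push_cast
    nlinarith [Real.pi_pos]

section Rows

variable {B ι K : Type*} [Field K]

theorem supported_fst_eq_span (s : B) :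
    supported K K {p : B × ι | p.1 = s} =
      Submodule.span K (Set.range fun n => single (s, n) (1 : K)) := by
  rw [supported_eq_span_single]
  congr 1
  ext
  simp [eq_comm]

theorem bijOn_supported_fst {f : (B × ι →₀ K) →ₗ[K] B × ι →₀ K} {s t : B} (φ : ι ≃ ι)
    {d : ι → K} (hd : ∀ n, d n ≠ 0) (hf : ∀ n, f (single (s, n) 1) = single (t, φ n) (d n)) :
    Set.BijOn f (supported K K {p : B × ι | p.1 = s}) (supported K K {p : B × ι | p.1 = t}) := by
  have hf' (n : ι) (a : K) : f (single (s, n) a) = single (t, φ n) (a * d n) := by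
    rw [← smul_single_one, map_smul, hf, smul_single, smul_eq_mul]
  let g : (B × ι →₀ K) →ₗ[K] B × ι →₀ K :=
    Finsupp.lift _ K _ fun p => single (s, φ.symm p.2) (d (φ.symm p.2))⁻¹
  have hg (p : B × ι) (a : K) :
      g (single p a) = single (s, φ.symm p.2) (a * (d (φ.symm p.2))⁻¹) := by
    simp only [g, lift_apply, smul_single, smul_eq_mul]
    exact sum_single_index (by simp)
  have hg_mem (u) : g u ∈ supported K K {p : B × ι | p.1 = s} := by
    induction u using Finsupp.induction_linear with
    | zero => simp
    | add u v hu hv => rw [map_add]; exact add_mem hu hv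
    | single p a => rw [hg]; exact single_mem_supported K _ rfl
  have hmaps : Set.MapsTo f (supported K K {p : B × ι | p.1 = s})
      (supported K K {p : B × ι | p.1 = t}) := by
    rw [supported_fst_eq_span]
    refine Submodule.span_le (p := (supported K K {p : B × ι | p.1 = t}).comap f) |>.2 ?_
    rintro _ ⟨n, rfl⟩
    rw [SetLike.mem_coe, Submodule.mem_comap, hf]
    exact single_mem_supported K _ rfl
  refine Set.InvOn.bijOn ⟨?_, ?_⟩ hmaps fun u _ => hg_mem u
  · rw [supported_fst_eq_span]
    refine LinearMap.eqOn_span' (f := g ∘ₗ f) (g := LinearMap.id) ?_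
    rintro _ ⟨n, rfl⟩
    rw [LinearMap.comp_apply, hf, hg, Equiv.symm_apply_apply, mul_inv_cancel₀ (hd n)]
    rfl
  · rw [supported_fst_eq_span]
    refine LinearMap.eqOn_span' (f := f ∘ₗ g) (g := LinearMap.id) ?_
    rintro _ ⟨n, rfl⟩
    rw [LinearMap.comp_apply, hg, hf', Equiv.apply_symm_apply, one_mul,
      inv_mul_cancel₀ (hd _)]
    rfl

end Rows

section Sec3

variable {B : Type*} [DecidableEq B] {M : CoxeterMatrix B} {s₁ t₁ s₂ t₂ : B}

variable (M s₁ t₁ s₂ t₂) in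
theorem sec3Act_sub_self_mem_supported (s : B) (v : B × ℤ →₀ ℂ) :
    sec3Act M s₁ t₁ s₂ t₂ s v - v ∈ supported ℂ ℂ {p : B × ℤ | p.1 = s} := by
  induction v using Finsupp.induction_linear with
  | zero => simp
  | add u v hu hv => rw [map_add, add_sub_add_comm]; exact add_mem hu hv
  | single p a =>
    rw [← smul_single_one, map_smul, ← smul_sub]
    refine Submodule.smul_mem _ _ ?_
    rw [sec3Act, lift_apply, sum_single_index (by simp), one_smul]
    split_ifs with h₀ h₁ h₂ h₃ h₄
    · have h : single p (1 : ℂ) ∈ supported ℂ ℂ {p : B × ℤ | p.1 = s} :=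
        single_mem_supported ℂ 1 h₀.symm
      exact sub_mem (neg_mem h) h
    all_goals
      rw [add_sub_cancel_left]
      refine Submodule.smul_mem _ _ (single_mem_supported ℂ 1 ?_)
    exacts [h₁.1.symm, h₂.1.symm, h₃.1.symm, h₄.1.symm, rfl]

theorem sec3Act_single_self (s : B) (n : ℤ) :
    sec3Act M s₁ t₁ s₂ t₂ s (single (s, n) 1) = -single (s, n) 1 := by
  rw [sec3Act, lift_apply, sum_single_index (by simp), one_smul, if_pos rfl]

theorem sec3Act_eq_neg_iff {s : B} {v : B × ℤ →₀ ℂ} :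
    sec3Act M s₁ t₁ s₂ t₂ s v = -v ↔ v ∈ supported ℂ ℂ {p : B × ℤ | p.1 = s} := by
  constructor
  · intro hv
    have h := sec3Act_sub_self_mem_supported M s₁ t₁ s₂ t₂ s v
    rw [hv, show -v - v = (-2 : ℂ) • v by module] at h
    exact (Submodule.smul_mem_iff _ (by norm_num)).1 h
  · intro hv
    rw [supported_fst_eq_span] at hv
    refine LinearMap.eqOn_span' (f := sec3Act M s₁ t₁ s₂ t₂ s) (g := -LinearMap.id) ?_ hv
    rintro _ ⟨n, rfl⟩
    exact sec3Act_single_self s n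

variable (M s₁ t₁ s₂ t₂) in
theorem sec3Act_single_of_ne {s t : B} (hst : s ≠ t) :
    ∃ (φ : ℤ ≃ ℤ) (d : ℤ → ℂ), (∀ n, d n ≠ 0) ∧ ∀ n,
      sec3Act M s₁ t₁ s₂ t₂ t (single (s, n) 1) =
        single (s, n) 1 + (2 * Real.cos (Real.pi / M s t) * d n : ℂ) • single (t, φ n) 1 := by
  simp only [sec3Act, lift_apply, zero_smul, sum_single_index, one_smul, if_neg hst.symm]
  split_ifs with h₁ h₂ h₃ h₄
  · obtain ⟨rfl, rfl⟩ := h₁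
    exact ⟨Equiv.addRight 1, 1, fun _ => one_ne_zero, fun n => by simp [M.symmetric t s]⟩
  · obtain ⟨rfl, rfl⟩ := h₂
    exact ⟨Equiv.subRight 1, 1, fun _ => one_ne_zero, fun n => by simp⟩
  · obtain ⟨rfl, rfl⟩ := h₃
    refine ⟨Equiv.addRight 1, fun n => (2 : ℂ) ^ n, fun n => zpow_ne_zero n two_ne_zero,
      fun n => ?_⟩
    rw [M.symmetric t s, Equiv.coe_addRight, zpow_add_one₀ two_ne_zero]
    ring_nf
  · obtain ⟨rfl, rfl⟩ := h₄
    refine ⟨Equiv.subRight 1, fun n => (2 : ℂ) ^ (1 - n), fun n => zpow_ne_zero _ two_ne_zero,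
      fun n => ?_⟩
    rw [Equiv.subRight_apply, show (2 : ℤ) - n = 1 - n + 1 by ring, zpow_add_one₀ two_ne_zero]
    ring_nf
  · exact ⟨Equiv.refl ℤ, 1, fun _ => one_ne_zero, fun n => by simp [M.symmetric t]⟩

end Sec3

theorem statement13_general {B W : Type*} [Group W] [DecidableEq B]
    (M : CoxeterMatrix B) (cs : CoxeterSystem M W)
    (s₁ t₁ s₂ t₂ : B)
    (ρ : Representation ℂ W ((B × ℤ) →₀ ℂ))
    (hρ : ∀ s : B, ρ (cs.simple s) = sec3Act M s₁ t₁ s₂ t₂ s) :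
    (∀ s : B, {v : (B × ℤ) →₀ ℂ | sec3Act M s₁ t₁ s₂ t₂ s v = -v} =
      ↑(Finsupp.supported ℂ ℂ {p : B × ℤ | p.1 = s})) ∧
    ∀ s t : B, (coxeterGraph M).Adj s t →
      ∀ f : ((B × ℤ) →₀ ℂ) →ₗ[ℂ] ((B × ℤ) →₀ ℂ),
        f = ((2 * Real.cos (Real.pi / (M s t : ℝ)) : ℂ))⁻¹ •
              (sec3Act M s₁ t₁ s₂ t₂ t - LinearMap.id) →
        (∀ v, sec3Act M s₁ t₁ s₂ t₂ s v = -v → sec3Act M s₁ t₁ s₂ t₂ t (f v) = -(f v)) ∧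
        (∀ v, sec3Act M s₁ t₁ s₂ t₂ s v = -v → f v = 0 → v = 0) ∧
        (∀ u, sec3Act M s₁ t₁ s₂ t₂ t u = -u →
          ∃ v, sec3Act M s₁ t₁ s₂ t₂ s v = -v ∧ f v = u) ∧
        (∀ v, sec3Act M s₁ t₁ s₂ t₂ s v = -v →
          f v ∈ Submodule.span ℂ {u | ∃ w : W, ρ w v = u}) := by
  refine ⟨fun s => Set.ext fun v => sec3Act_eq_neg_iff, fun s t ⟨hst, hm⟩ f hf => ?_⟩
  have hc : (2 * Real.cos (Real.pi / M s t) : ℂ) ≠ 0 := by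
    exact_mod_cast two_mul_cos_pi_div_ne_zero hm
  obtain ⟨φ, d, hd, hσ⟩ := sec3Act_single_of_ne M s₁ t₁ s₂ t₂ hst
  have hf_single (n : ℤ) : f (single (s, n) 1) = single (t, φ n) (d n) := by
    rw [hf, LinearMap.smul_apply, LinearMap.sub_apply, hσ, LinearMap.id_apply,
      add_sub_cancel_left, smul_smul, inv_mul_cancel_left₀ hc, smul_single_one]
  have hbij := bijOn_supported_fst φ hd hf_single
  simp only [sec3Act_eq_neg_iff]
  refine ⟨fun v hv => hbij.mapsTo hv, fun v hv h0 => hbij.injOn hv (zero_mem _) (by simpa),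
    fun u hu => hbij.surjOn hu, fun v _ => ?_⟩
  have hfv : f v = (2 * Real.cos (Real.pi / M s t) : ℂ)⁻¹ • (ρ (cs.simple t) v - ρ 1 v) := by
    rw [hf, hρ, map_one]; rfl
  rw [hfv]
  exact Submodule.smul_mem _ _ (sub_mem (Submodule.subset_span ⟨_, rfl⟩)
    (Submodule.subset_span ⟨_, rfl⟩))

/-- under the Section 3 assumptions, with `V = (B × ℤ) →₀ ℂ` the resulting
representation `ρ` of `W`: for `s ∈ S`, the `(−1)`-eigenspace `V₋ˢ = {v : s·v = −v}` equals
`⊕_{n ∈ ℤ} ℂ α_{s,n}` (the subspace of finsupps supported on `{s} × ℤ`); and for every edge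
`{s,t}` of the Coxeter graph, the linear map `f_{st} := v ↦ (t·v − v)/(2cos(π/m_{st}))`
maps `V₋ˢ` into `V₋ᵗ`, is a linear isomorphism from `V₋ˢ` onto `V₋ᵗ`, and sends each
`v ∈ V₋ˢ` into the `W`-subrepresentation of `V` generated by `v`. -/
theorem statement13 {B W : Type*} [Group W] [Fintype B] [DecidableEq B]
    (M : CoxeterMatrix B) (cs : CoxeterSystem M W)
    (hfin : ∀ s t : B, M s t ≠ 0)
    (hconn : (coxeterGraph M).Connected)
    (G₀ : SimpleGraph B) (hsub : G₀ ≤ coxeterGraph M) (htree : G₀.IsTree)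
    (s₁ t₁ s₂ t₂ : B)
    (he₁ : (coxeterGraph M).Adj s₁ t₁) (hne₁ : ¬ G₀.Adj s₁ t₁)
    (he₂ : (coxeterGraph M).Adj s₂ t₂) (hne₂ : ¬ G₀.Adj s₂ t₂)
    (hdist : Sym2.mk (s₁, t₁) ≠ Sym2.mk (s₂, t₂))
    (ρ : Representation ℂ W ((B × ℤ) →₀ ℂ))
    (hρ : ∀ s : B, ρ (cs.simple s) = sec3Act M s₁ t₁ s₂ t₂ s) :
    (∀ s : B, {v : (B × ℤ) →₀ ℂ | sec3Act M s₁ t₁ s₂ t₂ s v = -v} =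
      ↑(Finsupp.supported ℂ ℂ {p : B × ℤ | p.1 = s})) ∧
    ∀ s t : B, (coxeterGraph M).Adj s t →
      ∀ f : ((B × ℤ) →₀ ℂ) →ₗ[ℂ] ((B × ℤ) →₀ ℂ),
        f = ((2 * Real.cos (Real.pi / (M s t : ℝ)) : ℂ))⁻¹ •
              (sec3Act M s₁ t₁ s₂ t₂ t - LinearMap.id) →
        (∀ v, sec3Act M s₁ t₁ s₂ t₂ s v = -v → sec3Act M s₁ t₁ s₂ t₂ t (f v) = -(f v)) ∧
        (∀ v, sec3Act M s₁ t₁ s₂ t₂ s v = -v → f v = 0 → v = 0) ∧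
        (∀ u, sec3Act M s₁ t₁ s₂ t₂ t u = -u →
          ∃ v, sec3Act M s₁ t₁ s₂ t₂ s v = -v ∧ f v = u) ∧
        (∀ v, sec3Act M s₁ t₁ s₂ t₂ s v = -v →
          f v ∈ Submodule.span ℂ {u | ∃ w : W, ρ w v = u}) :=
  statement13_general M cs s₁ t₁ s₂ t₂ ρ hρ
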